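/- arXiv:1304.2295 — 3 statements merged into one kernel-verified Lean document; each statement's English description precedes it below -/
import Mathlib

section
/- Let T be a finite NW-deterministic Wang tile set admitting a valid Wang tiling of ℤ². Then the maps σ_⊥^m : Σ^ω → Σ^ω (m ≥ 1) are pairwise distinct; consequently, the semigroup generated by the Mealy automaton 𝒜_T is infinite. -/
/-- A Mealy automaton with state set `A` and alphabet `X`:
a transition map `δ : A × X → A` and an output map `σ : A × X → X`. -/
structure Mealy (A X : Type*) where
  δ : A → X → A
  σ : A → X → X

namespace Mealy

variable {A X : Type*} (M : Mealy A X)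

/-- The state reached from state `a` after reading the finite word `u`. -/
def stA : A → List X → A
  | a, [] => a
  | a, x :: u => stA (M.δ a x) u

/-- The output word produced by the single state `a` on the finite input word `u`. -/
def outA : A → List X → List X
  | _, [] => []
  | a, x :: u => M.σ a x :: outA (M.δ a x) u

/-- The extended output map: the action `σ_as` of a state word `as` on a finite word. -/
def outW (as : List A) (u : List X) : List X :=
  as.foldl (fun w b => M.outA b w) u

/-- The extended transition map: `δ_u` applied to a state word. -/
def stW : List A → List X → List A
  | [], _ => []
  | a :: as, u => M.stA a u :: stW as (M.outA a u)

/-- The action of a single state `a` on an infinite word. -/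
def outInf (a : A) (w : ℕ → X) : ℕ → X :=
  fun n => M.σ (M.stA a (List.ofFn fun i : Fin n => w i)) (w n)

/-- The action `σ_as` of a state word on an infinite word. -/
def outWInf (as : List A) (w : ℕ → X) : ℕ → X :=
  as.foldl (fun v b => M.outInf b v) w

/-- The semigroup generated by the Mealy automaton, as the set of all
transformations of infinite words given by nonempty state words. -/
def genSet : Set ((ℕ → X) → (ℕ → X)) :=
  {f | ∃ as : List A, as ≠ [] ∧ f = M.outWInf as}

end Mealy

/-- Concatenation of a finite word with an infinite word. -/
def listApp {X : Type*} (p : List X) (q : ℕ → X) : ℕ → X :=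
  fun n => if h : n < p.length then p.get ⟨n, h⟩ else q (n - p.length)

/-- A tile set is NW-deterministic if each tile is determined by its
north and west colors. -/
def NWDet {T C : Type*} (N _S _E W : T → C) : Prop :=
  ∀ s t : T, N s = N t → W s = W t → s = t

open Classical in
/-- The Mealy automaton `𝒜_T` of a tile set: states and letters are tiles
together with a fresh symbol `⊥` (here `none`); the transition is the reset
`δ(x,y) = y`; the output `σ(s,t)` is the unique tile `r` with `r_N = t_S`
and `r_W = s_E` if it exists, and `⊥` otherwise. -/
noncomputable def tileM {T C : Type*} (N S E W : T → C) :
    Mealy (Option T) (Option T) where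
  δ := fun _ y => y
  σ := fun a x =>
    match a, x with
    | some s, some t =>
        if h : ∃ r : T, N r = S t ∧ W r = E s then some h.choose else none
    | _, _ => none

/-- A valid Wang tiling of the plane `ℤ²`. -/
def ValidZ2 {T C : Type*} (N S E W : T → C) (t : ℤ × ℤ → T) : Prop :=
  ∀ x y : ℤ, N (t (x, y)) = S (t (x, y + 1)) ∧ E (t (x, y)) = W (t (x + 1, y))

/-- A valid Wang tiling of the square `{0, 1, …, n}²`. -/
def ValidSquare {T C : Type*} (N S E W : T → C) (n : ℕ) (t : ℕ → ℕ → T) : Prop :=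
  (∀ x y : ℕ, x ≤ n → y < n → N (t x y) = S (t x (y + 1))) ∧
  (∀ x y : ℕ, x < n → y ≤ n → E (t x y) = W (t (x + 1) y))

/-!
Since the transition of `𝒜_T` is a reset, `σ_⊥` writes at position `n + 1` the tile whose west
and north neighbours are the input letters at positions `n` and `n + 1`; by NW-determinism this
is the tile the tiling `t` has there. Hence `σ_⊥^m` maps the diagonal `n ↦ t(n, n)` to the
diagonal `n ↦ t(n, n - m)` with its first `m` letters replaced by `⊥`, and these words are
pairwise distinct. The powers `σ_⊥^m = σ_{⊥^m}` all lie in the semigroup, which is therefore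
infinite.
-/

namespace Mealy

variable {A X : Type*} (M : Mealy A X)

theorem stA_append_singleton (a : A) (u : List X) (x : X) :
    M.stA a (u ++ [x]) = M.δ (M.stA a u) x := by
  induction u generalizing a with
  | nil => rfl
  | cons y u ih => exact ih (M.δ a y)

theorem outWInf_replicate (a : A) (k : ℕ) :
    M.outWInf (List.replicate k a) = (M.outInf a)^[k] := by
  funext w
  induction k generalizing w with
  | zero => rfl
  | succ k ih =>
    rw [List.replicate_succ, Function.iterate_succ_apply]
    exact ih (M.outInf a w)

theorem outInf_zero (a : A) (w : ℕ → X) : M.outInf a w 0 = M.σ a (w 0) := rfl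

theorem outInf_succ_of_reset {M : Mealy X X} (hδ : ∀ a x, M.δ a x = x) (a : X) (w : ℕ → X)
    (n : ℕ) : M.outInf a w (n + 1) = M.σ (w n) (w (n + 1)) := by
  simp only [outInf, List.ofFn_succ', List.concat_eq_append, stA_append_singleton, hδ,
    Fin.val_last]

end Mealy

section TileAutomaton

variable {T C : Type*} {N S E W : T → C}

theorem tileM_σ_none_left (x : Option T) : (tileM N S E W).σ none x = none := by
  cases x <;> rfl

theorem tileM_σ_some_of_fits (hNW : NWDet N S E W) {s u r : T}
    (hN : N r = S u) (hW : W r = E s) : (tileM N S E W).σ (some s) (some u) = some r := by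
  have hex : ∃ r : T, N r = S u ∧ W r = E s := ⟨r, hN, hW⟩
  have hr : hex.choose = r := hNW _ _ (hex.choose_spec.1.trans hN.symm)
    (hex.choose_spec.2.trans hW.symm)
  simp only [tileM, dif_pos hex, hr]

def shiftedDiagonal (t : ℤ × ℤ → T) (m : ℕ) : ℕ → Option T :=
  fun n => if n < m then none else some (t (n, (n : ℤ) - m))

theorem outInf_none_shiftedDiagonal (hNW : NWDet N S E W) {t : ℤ × ℤ → T}
    (ht : ValidZ2 N S E W t) (m : ℕ) :
    (tileM N S E W).outInf none (shiftedDiagonal t m) = shiftedDiagonal t (m + 1) := by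
  have hδ : ∀ a x, (tileM N S E W).δ a x = x := fun _ _ => rfl
  funext n
  rcases n with _ | j
  · rw [Mealy.outInf_zero, tileM_σ_none_left]
    rfl
  rw [Mealy.outInf_succ_of_reset hδ]
  by_cases hj : j < m
  · rw [shiftedDiagonal, if_pos hj, tileM_σ_none_left, shiftedDiagonal, if_pos (by omega)]
  · have hN : N (t (j + 1, j - m)) = S (t (j + 1, j + 1 - m)) := by
      simpa only [sub_add_eq_add_sub] using (ht (j + 1) (j - m)).1
    simp only [shiftedDiagonal, if_neg hj, if_neg (show ¬ j + 1 < m by omega),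
      if_neg (show ¬ j + 1 < m + 1 by omega), Nat.cast_succ, add_sub_add_right_eq_sub]
    exact tileM_σ_some_of_fits hNW hN (ht j (j - m)).2.symm

theorem shiftedDiagonal_injective (t : ℤ × ℤ → T) : Function.Injective (shiftedDiagonal t) := by
  have hlt : ∀ m m', m < m' → shiftedDiagonal t m ≠ shiftedDiagonal t m' := fun m m' hmm' h => by
    simpa [shiftedDiagonal, hmm'] using congrFun h m
  intro m m' h
  by_contra hne
  rcases Nat.lt_or_gt_of_ne hne with hmm' | hm'm
  exacts [hlt m m' hmm' h, hlt m' m hm'm h.symm]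

theorem iterate_outInf_none_shiftedDiagonal_zero (hNW : NWDet N S E W) {t : ℤ × ℤ → T}
    (ht : ValidZ2 N S E W t) (m : ℕ) :
    ((tileM N S E W).outInf none)^[m] (shiftedDiagonal t 0) = shiftedDiagonal t m := by
  induction m with
  | zero => rfl
  | succ m ih => rw [Function.iterate_succ_apply', ih, outInf_none_shiftedDiagonal hNW ht]

theorem iterate_outInf_none_injective (hNW : NWDet N S E W) {t : ℤ × ℤ → T}
    (ht : ValidZ2 N S E W t) :
    Function.Injective fun m : ℕ => ((tileM N S E W).outInf none)^[m] := fun m m' h =>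
  shiftedDiagonal_injective t <| by
    simpa only [iterate_outInf_none_shiftedDiagonal_zero hNW ht] using
      congrFun h (shiftedDiagonal t 0)

end TileAutomaton

theorem stmt_9_general {T C : Type*} (N S E W : T → C)
    (hNW : NWDet N S E W) (t : ℤ × ℤ → T) (ht : ValidZ2 N S E W t) :
    (∀ m m' : ℕ, 1 ≤ m → 1 ≤ m' →
      ((tileM N S E W).outInf none)^[m] = ((tileM N S E W).outInf none)^[m'] →
        m = m') ∧
    (tileM N S E W).genSet.Infinite := by
  have hinj := iterate_outInf_none_injective hNW ht
  refine ⟨fun m m' _ _ h => hinj h, ?_⟩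
  refine Set.infinite_of_injective_forall_mem
    (f := fun m : ℕ => ((tileM N S E W).outInf none)^[m + 1])
    (fun a b h => Nat.succ_injective (hinj h)) fun m => ?_
  exact ⟨List.replicate (m + 1) none, by simp, (Mealy.outWInf_replicate _ none (m + 1)).symm⟩

/-- if an NW-deterministic tile set admits a valid Wang tiling of
`ℤ²`, then the maps `σ_⊥^m` (`m ≥ 1`) are pairwise distinct, and consequently
the semigroup generated by the Mealy automaton `𝒜_T` is infinite. -/
theorem stmt_9 {T C : Type*} [Fintype T] (N S E W : T → C)
    (hNW : NWDet N S E W) (t : ℤ × ℤ → T) (ht : ValidZ2 N S E W t) :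
    (∀ m m' : ℕ, 1 ≤ m → 1 ≤ m' →
      ((tileM N S E W).outInf none)^[m] = ((tileM N S E W).outInf none)^[m'] →
        m = m') ∧
    (tileM N S E W).genSet.Infinite :=
  stmt_9_general N S E W hNW t ht
end

section
/- Let T be a finite NW-deterministic tile set and suppose σ_u(pq) has a letter different from ⊥ at some position n + k (k ∈ ℕ) after applying a state word u of length 2n, where p ∈ Σ^n, q ∈ Σ^ω. Then {0,1,…,n}² admits a valid Wang tiling by T, given by the tiles f(i+j, i+k) for 0 ≤ i, j ≤ n (which are all ≠ ⊥), where f(i,j) is the j-th letter of the image of pq under the first i states of u. -/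
/-!
In `𝒜_T` the state after reading a word is its last letter, so the letter at position `j + 1` of
`τ_{i+1}(pq)` is `σ` applied to the letters at positions `j` and `j + 1` of `τ_i(pq)`. A letter
`r ≠ ⊥` produced by `σ(s, t)` forces `s, t ≠ ⊥`, `r_N = t_S` and `r_W = s_E`. Hence
non-`⊥` letters propagate backwards from `f(2n, n + k)` through the whole triangle
`f(i + j, i + k)`, and the two edge conditions are exactly the vertical and horizontal matching
rules of the square.
-/

theorem Mealy.outWInf_take_succ {A X : Type*} (M : Mealy A X) (u : List A) (w : ℕ → X)
    {a : ℕ} (ha : a < u.length) :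
    M.outWInf (u.take (a + 1)) w = M.outInf u[a] (M.outWInf (u.take a) w) := by
  simp only [Mealy.outWInf, List.take_add_one, List.getElem?_eq_getElem ha, Option.toList_some,
    List.foldl_append, List.foldl_cons, List.foldl_nil]

section TileAutomaton

variable {T C : Type*} (N S E W : T → C)

theorem tileM_stA (a : Option T) (l : List (Option T)) :
    (tileM N S E W).stA a l = l.getLastD a := by
  induction l generalizing a with
  | nil => rfl
  | cons x l ih =>
    rw [Mealy.stA, List.getLastD_cons]
    exact ih x

theorem tileM_outInf_zero (s : Option T) (w : ℕ → Option T) :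
    (tileM N S E W).outInf s w 0 = (tileM N S E W).σ s (w 0) := by
  rw [Mealy.outInf, List.ofFn_zero, tileM_stA]
  rfl

theorem tileM_outInf_succ (s : Option T) (w : ℕ → Option T) (m : ℕ) :
    (tileM N S E W).outInf s w (m + 1) = (tileM N S E W).σ (w m) (w (m + 1)) := by
  rw [Mealy.outInf, tileM_stA, List.ofFn_succ']
  simp [List.concat_eq_append]

variable {N S E W}

open Classical in
theorem tileM_σ_eq_some {s t : Option T} {r : T} (h : (tileM N S E W).σ s t = some r) :
    ∃ s' t', s = some s' ∧ t = some t' ∧ N r = S t' ∧ W r = E s' := by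
  match s, t with
  | none, _ => cases h
  | some _, none => cases h
  | some s', some t' =>
    refine ⟨s', t', rfl, rfl, ?_⟩
    change (if hx : ∃ r : T, N r = S t' ∧ W r = E s' then some hx.choose else none) = some r at h
    split_ifs at h with hx
    cases h
    exact hx.choose_spec

theorem tileM_outInf_eq_some_north {s : Option T} {w : ℕ → Option T} {m : ℕ} {r : T}
    (h : (tileM N S E W).outInf s w m = some r) : ∃ t, w m = some t ∧ N r = S t := by
  cases m with
  | zero =>
    obtain ⟨-, t, -, ht, hN, -⟩ := tileM_σ_eq_some (by rwa [tileM_outInf_zero] at h)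
    exact ⟨t, ht, hN⟩
  | succ m =>
    obtain ⟨-, t, -, ht, hN, -⟩ := tileM_σ_eq_some (by rwa [tileM_outInf_succ] at h)
    exact ⟨t, ht, hN⟩

theorem tileM_outInf_eq_some_west {s : Option T} {w : ℕ → Option T} {m : ℕ} {r : T}
    (h : (tileM N S E W).outInf s w (m + 1) = some r) : ∃ s', w m = some s' ∧ W r = E s' := by
  obtain ⟨s', -, hs, -, -, hW⟩ := tileM_σ_eq_some (by rwa [tileM_outInf_succ] at h)
  exact ⟨s', hs, hW⟩

theorem tileM_outInf_ne_none {s : Option T} {w : ℕ → Option T} {m : ℕ}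
    (h : (tileM N S E W).outInf s w m ≠ none) : w m ≠ none := by
  obtain ⟨r, hr⟩ := Option.ne_none_iff_exists'.mp h
  obtain ⟨t, ht, -⟩ := tileM_outInf_eq_some_north hr
  simp [ht]

theorem tileM_outInf_succ_ne_none {s : Option T} {w : ℕ → Option T} {m : ℕ}
    (h : (tileM N S E W).outInf s w (m + 1) ≠ none) : w m ≠ none := by
  obtain ⟨r, hr⟩ := Option.ne_none_iff_exists'.mp h
  obtain ⟨s', hs, -⟩ := tileM_outInf_eq_some_west hr
  simp [hs]

end TileAutomaton

section Orbit

variable {T C : Type*} {N S E W : T → C} {f : ℕ → ℕ → Option T} {L : ℕ}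

theorem orbit_ne_none_of_add
    (hrec : ∀ a < L, ∃ s, f (a + 1) = (tileM N S E W).outInf s (f a))
    {a b d e : ℕ} (he : e ≤ d) (hL : a + d ≤ L) (h : f (a + d) (b + e) ≠ none) :
    f a b ≠ none := by
  induction d generalizing e with
  | zero => simpa [Nat.le_zero.mp he] using h
  | succ d ih =>
    obtain ⟨s, hs⟩ := hrec (a + d) (by omega)
    rw [← add_assoc, hs] at h
    cases e with
    | zero => exact ih (Nat.zero_le d) (by omega) (tileM_outInf_ne_none h)
    | succ e => exact ih (by omega) (by omega) (tileM_outInf_succ_ne_none h)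

theorem orbit_north_eq_south
    (hrec : ∀ a < L, ∃ s, f (a + 1) = (tileM N S E W).outInf s (f a))
    {a b : ℕ} (ha : a < L) {r t : T} (hr : f (a + 1) b = some r) (ht : f a b = some t) :
    N r = S t := by
  obtain ⟨s, hs⟩ := hrec a ha
  obtain ⟨t', ht', hN⟩ := tileM_outInf_eq_some_north (hs ▸ hr)
  obtain rfl : t = t' := Option.some_inj.mp (ht.symm.trans ht')
  exact hN

theorem orbit_west_eq_east
    (hrec : ∀ a < L, ∃ s, f (a + 1) = (tileM N S E W).outInf s (f a))
    {a b : ℕ} (ha : a < L) {r s : T} (hr : f (a + 1) (b + 1) = some r) (hs : f a b = some s) :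
    W r = E s := by
  obtain ⟨x, hx⟩ := hrec a ha
  obtain ⟨s', hs', hW⟩ := tileM_outInf_eq_some_west (hx ▸ hr)
  obtain rfl : s = s' := Option.some_inj.mp (hs.symm.trans hs')
  exact hW

end Orbit

theorem stmt_17_general {T C : Type*} (N S E W : T → C)
    (n : ℕ) (u : List (Option T)) (hu : u.length = 2 * n)
    (p : List (Option T)) (q : ℕ → Option T)
    (f : ℕ → ℕ → Option T)
    (hf : ∀ i j, f i j = (tileM N S E W).outWInf (u.take i) (listApp p q) j)
    (k : ℕ) (h : f (2 * n) (n + k) ≠ none) :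
    (∀ i j : ℕ, i ≤ n → j ≤ n → f (i + j) (i + k) ≠ none) ∧
    ∃ t : ℕ → ℕ → T, ValidSquare N S E W n t ∧
      ∀ i j : ℕ, i ≤ n → j ≤ n → f (i + j) (i + k) = some (t i (n - j)) := by
  have hrec : ∀ a < 2 * n, ∃ s, f (a + 1) = (tileM N S E W).outInf s (f a) := fun a ha =>
    ⟨u[a], funext fun j => by
      rw [hf, Mealy.outWInf_take_succ _ _ _ (hu ▸ ha : a < u.length), ← funext (hf a)]⟩
  have hne : ∀ i j, i ≤ n → j ≤ n → f (i + j) (i + k) ≠ none := fun i j hi hj =>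
    orbit_ne_none_of_add hrec (d := 2 * n - (i + j)) (e := n - i) (by omega) (by omega)
      (by convert h using 2 <;> omega)
  obtain ⟨r₀, -⟩ := Option.ne_none_iff_exists'.mp h
  set t : ℕ → ℕ → T := fun i y => (f (i + (n - y)) (i + k)).getD r₀
  have ht : ∀ i j, i ≤ n → j ≤ n → f (i + j) (i + k) = some (t i (n - j)) := by
    intro i j hi hj
    obtain ⟨r, hr⟩ := Option.ne_none_iff_exists'.mp (hne i j hi hj)
    simp only [t, Nat.sub_sub_self hj, hr, Option.getD_some]
  refine ⟨hne, t, ⟨fun x y hx hy => ?_, fun x y hx hy => ?_⟩, ht⟩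
  · have hcur := ht x (n - y) hx (by omega)
    have hnorth := ht x (n - y - 1) hx (by omega)
    rw [Nat.sub_sub_self hy.le] at hcur
    rw [show n - (n - y - 1) = y + 1 by omega] at hnorth
    refine orbit_north_eq_south hrec (a := x + (n - y - 1)) (by omega) ?_ hnorth
    rwa [show x + (n - y - 1) + 1 = x + (n - y) by omega]
  · have hcur := ht x (n - y) hx.le (by omega)
    have heast := ht (x + 1) (n - y) hx (by omega)
    rw [Nat.sub_sub_self hy] at hcur heast
    refine (orbit_west_eq_east hrec (a := x + (n - y)) (b := x + k) (by omega) ?_ hcur).symm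
    rwa [show x + (n - y) + 1 = x + 1 + (n - y) by omega, show x + k + 1 = x + 1 + k by omega]

/-- if applying a state word `u` of length `2n` to `pq`
(`p ∈ Σ^n`, `q ∈ Σ^ω`) yields a letter `≠ ⊥` at some position `n + k`, then
all tiles `f(i+j, i+k)` for `0 ≤ i, j ≤ n` are `≠ ⊥` and they form a valid
Wang tiling of `{0, 1, …, n}²`, the tile `f(i+j, i+k)` being placed at
position `(i, n−j)`. (Here `f(i,j)` is the `j`-th letter of the image of
`pq` under the first `i` states of `u`.) -/
theorem stmt_17 {T C : Type*} [Fintype T] (N S E W : T → C)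
    (hNW : NWDet N S E W) (n : ℕ) (u : List (Option T)) (hu : u.length = 2 * n)
    (p : List (Option T)) (hp : p.length = n) (q : ℕ → Option T)
    (f : ℕ → ℕ → Option T)
    (hf : ∀ i j, f i j = (tileM N S E W).outWInf (u.take i) (listApp p q) j)
    (k : ℕ) (h : f (2 * n) (n + k) ≠ none) :
    (∀ i j : ℕ, i ≤ n → j ≤ n → f (i + j) (i + k) ≠ none) ∧
    ∃ t : ℕ → ℕ → T, ValidSquare N S E W n t ∧
      ∀ i j : ℕ, i ≤ n → j ≤ n → f (i + j) (i + k) = some (t i (n - j)) :=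
  stmt_17_general N S E W n u hu p q f hf k h
end

section
/- For the Mealy automaton 𝒜_T of a finite NW-deterministic tile set, if a state word u of length at least 2n satisfies σ_v(pq) = σ_v(p)⊥^ω for its prefix v of length 2n (for all p ∈ Σ^n, q ∈ Σ^ω), then σ_u(pq) = σ_u(p)⊥^ω for all p ∈ Σ^n, q ∈ Σ^ω. -/
/-!
Every state of `𝒜_T` maps `⊥` to `⊥`, so any state word sends `p ⊥^ω` to `σ(p) ⊥^ω`.
Since `σ_u = σ_w ∘ σ_v` for `u = v w`, the hypothesis `σ_v(pq) = σ_v(p) ⊥^ω` propagates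
from the prefix `v` to the whole word `u`.
-/

theorem ofFn_listApp_eq_take {X : Type*} (p : List X) (q : ℕ → X) {m : ℕ} (h : m ≤ p.length) :
    (List.ofFn fun i : Fin m => listApp p q i) = p.take m := by
  apply List.ext_getElem
  · simp [h]
  · intro i hi _
    have hip : i < p.length := by simp at hi; omega
    simp [listApp, hip]

namespace Mealy

variable {A X : Type*} (M : Mealy A X)

theorem length_outA (a : A) (p : List X) : (M.outA a p).length = p.length := by
  induction p generalizing a with
  | nil => rfl
  | cons x p ih => simp [outA, ih]

theorem getElem_outA (a : A) (p : List X) (m : ℕ) (h : m < (M.outA a p).length) :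
    (M.outA a p)[m] = M.σ (M.stA a (p.take m)) (p[m]'(by rwa [length_outA] at h)) := by
  induction p generalizing a m with
  | nil => simp [outA] at h
  | cons x p ih =>
    cases m with
    | zero => simp [outA, stA]
    | succ m => simpa [outA, stA] using ih (M.δ a x) m (by simpa [outA] using h)

theorem outWInf_append (as bs : List A) (w : ℕ → X) :
    M.outWInf (as ++ bs) w = M.outWInf bs (M.outWInf as w) :=
  List.foldl_append ..

theorem outW_append (as bs : List A) (p : List X) :
    M.outW (as ++ bs) p = M.outW bs (M.outW as p) :=
  List.foldl_append ..

theorem outInf_listApp_const {bot : X} (hbot : ∀ a : A, M.σ a bot = bot) (a : A)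
    (p : List X) :
    M.outInf a (listApp p fun _ => bot) = listApp (M.outA a p) fun _ => bot := by
  funext m
  by_cases h : m < p.length
  · have h' : m < (M.outA a p).length := by rwa [length_outA]
    rw [outInf, ofFn_listApp_eq_take p _ h.le]
    simp only [listApp, h, h', dif_pos, List.get_eq_getElem, getElem_outA]
  · have h' : ¬ m < (M.outA a p).length := by rwa [length_outA]
    simp only [outInf, listApp, h, h', dif_neg, not_false_eq_true]
    exact hbot _

theorem outWInf_listApp_const {bot : X} (hbot : ∀ a : A, M.σ a bot = bot) (as : List A)
    (p : List X) :
    M.outWInf as (listApp p fun _ => bot) = listApp (M.outW as p) fun _ => bot := by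
  induction as generalizing p with
  | nil => rfl
  | cons a as ih => exact (congrArg (M.outWInf as) (M.outInf_listApp_const hbot a p)).trans (ih _)

theorem outWInf_append_eq_listApp_const {bot : X} (hbot : ∀ a : A, M.σ a bot = bot)
    {vs : List A} {p : List X} {w : ℕ → X}
    (hv : M.outWInf vs w = listApp (M.outW vs p) fun _ => bot) (ws : List A) :
    M.outWInf (vs ++ ws) w = listApp (M.outW (vs ++ ws) p) fun _ => bot := by
  rw [outWInf_append, hv, outWInf_listApp_const M hbot, outW_append]

end Mealy

theorem tileM_σ_none {T C : Type*} (N S E W : T → C) (a : Option T) :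
    (tileM N S E W).σ a none = none := by
  cases a <;> rfl

theorem stmt_19_general {T C : Type*} (N S E W : T → C)
    (n : ℕ) (u : List (Option T))
    (hv : ∀ p : List (Option T), p.length = n → ∀ q : ℕ → Option T,
      (tileM N S E W).outWInf (u.take (2 * n)) (listApp p q) =
        listApp ((tileM N S E W).outW (u.take (2 * n)) p) fun _ => none) :
    ∀ p : List (Option T), p.length = n → ∀ q : ℕ → Option T,
      (tileM N S E W).outWInf u (listApp p q) =
        listApp ((tileM N S E W).outW u p) fun _ => none := by
  intro p hp q
  simpa only [List.take_append_drop] using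
    (tileM N S E W).outWInf_append_eq_listApp_const (tileM_σ_none N S E W) (hv p hp q)
      (u.drop (2 * n))

/-- in `𝒜_T`, if a state word `u` of length at least `2n` is
such that its prefix `v` of length `2n` satisfies `σ_v(pq) = σ_v(p)⊥^ω` for
all `p ∈ Σ^n`, `q ∈ Σ^ω`, then `σ_u(pq) = σ_u(p)⊥^ω` as well. -/
theorem stmt_19 {T C : Type*} [Fintype T] (N S E W : T → C)
    (hNW : NWDet N S E W) (n : ℕ) (u : List (Option T)) (hu : 2 * n ≤ u.length)
    (hv : ∀ p : List (Option T), p.length = n → ∀ q : ℕ → Option T,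
      (tileM N S E W).outWInf (u.take (2 * n)) (listApp p q) =
        listApp ((tileM N S E W).outW (u.take (2 * n)) p) fun _ => none) :
    ∀ p : List (Option T), p.length = n → ∀ q : ℕ → Option T,
      (tileM N S E W).outWInf u (listApp p q) =
        listApp ((tileM N S E W).outW u p) fun _ => none :=
  stmt_19_general N S E W n u hv
end
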